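/- Every valid reconciliation for a Join bag is well-behaved: if μ is the (L→left, R→right)-restriction of a well-behaved F-partial solution ψ for a Join bag (L∪R, S, F), then μ contains no arc whose endpoints receive two distinct labels from {left, right, future}, and μ is well-behaved. -/

import Mathlib

namespace TreeContainment

open scoped Classical

variable {V Λ : Type}

/-- A directed graph with an explicit vertex set. -/
structure DGraph (V : Type) where
  verts : Set V
  Arc : V → V → Prop
  arc_left : ∀ ⦃u v : V⦄, Arc u v → u ∈ verts
  arc_right : ∀ ⦃u v : V⦄, Arc u v → v ∈ verts

noncomputable def DGraph.inDeg (G : DGraph V) (v : V) : ℕ := {u : V | G.Arc u v}.ncard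
noncomputable def DGraph.outDeg (G : DGraph V) (v : V) : ℕ := {u : V | G.Arc v u}.ncard
def DGraph.Acyclic (G : DGraph V) : Prop := ∀ v : V, ¬ Relation.TransGen G.Arc v v

def IsSubgraph (H G : DGraph V) : Prop :=
  H.verts ⊆ G.verts ∧ ∀ ⦃u v⦄, H.Arc u v → G.Arc u v

/-- The consecutive pairs (arcs) of a list of vertices. -/
def listArcs (p : List V) : List (V × V) := p.zip p.tail

def IsArcOf (p : List V) (a b : V) : Prop := (a, b) ∈ listArcs p

lemma isArcOf_mem_left {p : List V} {a b : V} (h : IsArcOf p a b) : a ∈ p :=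
  (List.of_mem_zip h).1

lemma isArcOf_mem_right {p : List V} {a b : V} (h : IsArcOf p a b) : b ∈ p :=
  List.mem_of_mem_tail (List.of_mem_zip h).2

/-- `p` is a directed path from `u` to `v` with respect to the arc relation `A`. -/
def DipathFrom (A : V → V → Prop) (u v : V) (p : List V) : Prop :=
  p.Chain' A ∧ p.Nodup ∧ p.head? = some u ∧ p.getLast? = some v

/-- Rooted binary phylogenetic network. -/
def IsBinPhyloNet (N : DGraph V) : Prop :=
  N.Acyclic ∧ N.verts.Finite ∧ N.verts.Nonempty ∧
  (∃! ρ, ρ ∈ N.verts ∧ N.inDeg ρ = 0) ∧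
  ∀ v ∈ N.verts,
    (N.inDeg v = 0 ∧ N.outDeg v = 2) ∨ (N.inDeg v = 1 ∧ N.outDeg v = 0) ∨
    (N.inDeg v = 2 ∧ N.outDeg v = 1) ∨ (N.inDeg v = 1 ∧ N.outDeg v = 2)

/-- Rooted binary phylogenetic tree: a binary phylogenetic network without reticulations. -/
def IsBinPhyloTree (T : DGraph V) : Prop :=
  IsBinPhyloNet T ∧ ∀ v ∈ T.verts, T.inDeg v ≤ 1

def leaves (G : DGraph V) : Set V :=
  {v : V | v ∈ G.verts ∧ G.inDeg v = 1 ∧ G.outDeg v = 0}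

/-- Equally labelled leaves of `N` and `T` are identified: the common vertices of the two
graphs are exactly the leaves of each side. -/
def SharedLeaves (N T : DGraph V) : Prop :=
  N.verts ∩ T.verts = leaves N ∧ N.verts ∩ T.verts = leaves T

/-- A witness that `H` is a subdivision of the tree `Tg`. -/
structure SubdivWitness (H Tg : DGraph V) where
  vmap : V → V
  pmap : V → V → List V
  vmap_mem : ∀ u ∈ Tg.verts, vmap u ∈ H.verts
  inj : ∀ u ∈ Tg.verts, ∀ v ∈ Tg.verts, vmap u = vmap v → u = v
  path_spec : ∀ ⦃u v⦄, Tg.Arc u v → DipathFrom H.Arc (vmap u) (vmap v) (pmap u v)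
  path_len : ∀ ⦃u v⦄, Tg.Arc u v → 2 ≤ (pmap u v).length
  internal_new : ∀ ⦃u v⦄, Tg.Arc u v → ∀ z ∈ pmap u v, z ≠ vmap u → z ≠ vmap v →
    ∀ w ∈ Tg.verts, vmap w ≠ z
  internal_disjoint : ∀ ⦃u v u' v'⦄, Tg.Arc u v → Tg.Arc u' v' → (u, v) ≠ (u', v') →
    ∀ z, z ∈ pmap u v → z ∈ pmap u' v' →
      (z = vmap u ∨ z = vmap v) ∧ (z = vmap u' ∨ z = vmap v')
  arcs_cover : ∀ a b, H.Arc a b → ∃ u v, Tg.Arc u v ∧ IsArcOf (pmap u v) a b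
  verts_cover : ∀ z ∈ H.verts, (∃ u ∈ Tg.verts, vmap u = z) ∨ ∃ u v, Tg.Arc u v ∧ z ∈ pmap u v

/-- `N` displays `T`: some subgraph of `N` is a subdivision of `T`, respecting
the (identified) leaf labels. -/
def Displays (N T : DGraph V) : Prop :=
  ∃ H : DGraph V, IsSubgraph H N ∧
    ∃ w : SubdivWitness H T, ∀ u ∈ T.verts ∩ N.verts, w.vmap u = u

/-- An embedding function of the tree `Tg` into the network `Ng`
(an embedding function on the display graph `D(Ng,Tg)`). -/
structure EmbOn (Tg Ng : DGraph V) where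
  vmap : V → V
  pmap : V → V → List V
  vmap_mem : ∀ u ∈ Tg.verts, vmap u ∈ Ng.verts
  path_spec : ∀ ⦃u v⦄, Tg.Arc u v → DipathFrom Ng.Arc (vmap u) (vmap v) (pmap u v)
  inj : ∀ u ∈ Tg.verts, ∀ v ∈ Tg.verts, vmap u = vmap v → u = v
  fixes : ∀ u ∈ Tg.verts ∩ Ng.verts, vmap u = u
  arc_disjoint : ∀ ⦃u v u' v'⦄, Tg.Arc u v → Tg.Arc u' v' → (u, v) ≠ (u', v') →
    ∀ e, e ∈ listArcs (pmap u v) → e ∉ listArcs (pmap u' v')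
  share : ∀ ⦃u v u' v'⦄, Tg.Arc u v → Tg.Arc u' v' → (u, v) ≠ (u', v') →
    ∀ z, z ∈ pmap u v → z ∈ pmap u' v' →
      ∃ w, (w = u ∨ w = v) ∧ (w = u' ∨ w = v') ∧ vmap w = z

/-- The subgraph of the network consisting of all arcs lying on some embedding path. -/
def usedSubgraph (Tg Ng : DGraph V) (φ : EmbOn Tg Ng) : DGraph V where
  verts := {z : V | ∃ u v, Tg.Arc u v ∧ z ∈ φ.pmap u v}
  Arc a b := ∃ u v, Tg.Arc u v ∧ IsArcOf (φ.pmap u v) a b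
  arc_left := by
    rintro a b ⟨u, v, huv, harc⟩
    exact ⟨u, v, huv, isArcOf_mem_left harc⟩
  arc_right := by
    rintro a b ⟨u, v, huv, harc⟩
    exact ⟨u, v, huv, isArcOf_mem_right harc⟩

/-- A display graph: a DAG whose vertex set is covered by a tree side `VT`
and a network side `VN`, satisfying the degree conditions of the paper. -/
structure DispGraph (V : Type) extends DGraph V where
  VT : Set V
  VN : Set V
  union_eq : VT ∪ VN = verts
  finite : verts.Finite
  acyclic : ∀ v : V, ¬ Relation.TransGen Arc v v
  tree_indeg : ∀ v : V, {u : V | Arc u v ∧ u ∈ VT ∧ v ∈ VT}.ncard ≤ 1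
  indeg_le : ∀ v : V, {u : V | Arc u v}.ncard ≤ 2
  outdeg_le : ∀ v : V, {u : V | Arc v u}.ncard ≤ 2
  totdeg_le : ∀ v : V, {u : V | Arc u v}.ncard + {u : V | Arc v u}.ncard ≤ 3
  shared_out : ∀ v ∈ VT ∩ VN, ∀ u, ¬ Arc v u
  shared_in_T : ∀ v ∈ VT ∩ VN, {u : V | Arc u v ∧ u ∈ VT}.ncard ≤ 1
  shared_in_N : ∀ v ∈ VT ∩ VN, {u : V | Arc u v ∧ u ∈ VN}.ncard ≤ 1

/-- The tree side of a display graph. -/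
def DispGraph.treeSide (G : DispGraph V) : DGraph V where
  verts := G.VT
  Arc u v := G.Arc u v ∧ u ∈ G.VT ∧ v ∈ G.VT
  arc_left := by intro u v h; exact h.2.1
  arc_right := by intro u v h; exact h.2.2

/-- The network side of a display graph. -/
def DispGraph.netSide (G : DispGraph V) : DGraph V where
  verts := G.VN
  Arc u v := G.Arc u v ∧ u ∈ G.VN ∧ v ∈ G.VN
  arc_left := by intro u v h; exact h.2.1
  arc_right := by intro u v h; exact h.2.2

def DispGraph.TArc (G : DispGraph V) (u v : V) : Prop := G.treeSide.Arc u v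
def DispGraph.NArc (G : DispGraph V) (u v : V) : Prop := G.netSide.Arc u v
noncomputable def DispGraph.inDeg (G : DispGraph V) : V → ℕ := G.toDGraph.inDeg
noncomputable def DispGraph.outDeg (G : DispGraph V) : V → ℕ := G.toDGraph.outDeg

/-- An embedding function on a display graph: an embedding of its tree side into
its network side. -/
abbrev EmbFun (G : DispGraph V) := EmbOn G.treeSide G.netSide

/-- The data of a containment structure: a display graph, an embedding function on it,
and an isolabelling into vertices of the ambient display graph or labels from `Λ`. -/
structure CStruct (V Λ : Type) where
  G : DispGraph V
  emb : EmbFun G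
  ι : V → V ⊕ Λ

/-- Relabelling a containment structure by a restriction function. -/
def CStruct.relabel (g : V ⊕ Λ → V ⊕ Λ) (χ : CStruct V Λ) : CStruct V Λ :=
  ⟨χ.G, χ.emb, fun v => g (χ.ι v)⟩

/-- `ι` is an `(S,Y)`-isolabelling on the display graph of `χ`, relative to the
ambient display graph `Din`. -/
def IsIsolabelling (Din : DispGraph V) (S : Set V) (Ys : Set Λ) (χ : CStruct V Λ) : Prop :=
  (∀ u ∈ χ.G.verts, (∃ s ∈ S, χ.ι u = Sum.inl s) ∨ (∃ y ∈ Ys, χ.ι u = Sum.inr y)) ∧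
  (∀ s ∈ S, ∃ u ∈ χ.G.verts, χ.ι u = Sum.inl s) ∧
  (∀ u ∈ χ.G.verts, ∀ s ∈ S, χ.ι u = Sum.inl s →
    (s ∈ Din.VN → u ∈ χ.G.VN) ∧ (s ∈ Din.VT → u ∈ χ.G.VT)) ∧
  (∀ u ∈ χ.G.verts, ∀ v ∈ χ.G.verts, ∀ s ∈ S, χ.ι u = Sum.inl s → χ.ι v = Sum.inl s → u = v) ∧
  (∀ u ∈ χ.G.verts, ∀ v ∈ χ.G.verts, ∀ s ∈ S, ∀ t ∈ S,
    χ.ι u = Sum.inl s → χ.ι v = Sum.inl t → (χ.G.Arc u v ↔ Din.Arc s t))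

/-- `χ` is an `(S,Y)`-containment structure relative to the ambient display graph `Din`. -/
def IsCS (Din : DispGraph V) (S : Set V) (Ys : Set Λ) (χ : CStruct V Λ) : Prop :=
  IsIsolabelling Din S Ys χ ∧
  (∀ u ∈ χ.G.verts, ∀ s ∈ S, χ.ι u = Sum.inl s →
    χ.G.inDeg u = Din.inDeg s ∧ χ.G.outDeg u = Din.outDeg s) ∧
  (∀ u ∈ χ.G.VT, χ.ι u ≠ χ.ι (χ.emb.vmap u) → χ.G.outDeg u = 2)

/-- A tree arc `uv` is `y`-redundant. -/
def TArcRedundant (χ : CStruct V Λ) (y : Λ) (u v : V) : Prop :=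
  χ.G.TArc u v ∧ χ.ι u = Sum.inr y ∧ χ.ι v = Sum.inr y ∧
    ∀ z ∈ χ.emb.pmap u v, χ.ι z = Sum.inr y

/-- A network arc `ab` is `y`-redundant. -/
def NArcRedundant (χ : CStruct V Λ) (y : Λ) (a b : V) : Prop :=
  χ.G.NArc a b ∧ χ.ι a = Sum.inr y ∧ χ.ι b = Sum.inr y ∧
    ∀ u v, χ.G.TArc u v → IsArcOf (χ.emb.pmap u v) a b → TArcRedundant χ y u v

def ArcRedundant (χ : CStruct V Λ) (y : Λ) (u v : V) : Prop :=
  TArcRedundant χ y u v ∨ NArcRedundant χ y u v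

/-- A tree vertex `v` is `y`-redundant. -/
def TVertRedundant (χ : CStruct V Λ) (y : Λ) (v : V) : Prop :=
  v ∈ χ.G.VT ∧ χ.ι v = Sum.inr y ∧ χ.ι (χ.emb.vmap v) = Sum.inr y ∧
  (∀ u, χ.G.Arc u v → ArcRedundant χ y u v) ∧
  (∀ u, χ.G.Arc v u → ArcRedundant χ y v u) ∧
  (∀ u, χ.G.Arc u (χ.emb.vmap v) → ArcRedundant χ y u (χ.emb.vmap v)) ∧
  (∀ u, χ.G.Arc (χ.emb.vmap v) u → ArcRedundant χ y (χ.emb.vmap v) u)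

/-- A network vertex `v` is `y`-redundant. -/
def NVertRedundant (χ : CStruct V Λ) (y : Λ) (v : V) : Prop :=
  v ∈ χ.G.VN ∧ χ.ι v = Sum.inr y ∧
  (∀ u, χ.G.Arc u v → ArcRedundant χ y u v) ∧
  (∀ u, χ.G.Arc v u → ArcRedundant χ y v u) ∧
  (∀ w ∈ χ.G.VT, χ.emb.vmap w = v → TVertRedundant χ y w)

def VertRedundant (χ : CStruct V Λ) (y : Λ) (v : V) : Prop :=
  TVertRedundant χ y v ∨ NVertRedundant χ y v

/-- `χ'` is the `g`-restriction of `χ`: relabel by `g` and delete all redundant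
arcs and vertices; the embedding and isolabelling are restricted accordingly. -/
def IsRestrictionOf (g : V ⊕ Λ → V ⊕ Λ) (χ' χ : CStruct V Λ) : Prop :=
  χ'.G.verts = χ.G.verts \ {v : V | ∃ y, VertRedundant (χ.relabel g) y v} ∧
  (∀ u v, χ'.G.Arc u v ↔ (χ.G.Arc u v ∧ ¬ ∃ y, ArcRedundant (χ.relabel g) y u v)) ∧
  χ'.G.VT = χ.G.VT ∩ χ'.G.verts ∧
  χ'.G.VN = χ.G.VN ∩ χ'.G.verts ∧
  (∀ v ∈ χ'.G.VT, χ'.emb.vmap v = χ.emb.vmap v) ∧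
  (∀ u v, χ'.G.TArc u v → χ'.emb.pmap u v = χ.emb.pmap u v) ∧
  (∀ v ∈ χ'.G.verts, χ'.ι v = g (χ.ι v))

/-- `g : S ∪ Y → S' ∪ Y` is a restriction function: identity on `S'`, mapping the rest
of `S` into `Y`, and mapping `Y` into `Y`. -/
def IsRestrictionFun (S S' : Set V) (Ys : Set Λ) (g : V ⊕ Λ → V ⊕ Λ) : Prop :=
  (∀ v ∈ S', g (Sum.inl v) = Sum.inl v) ∧
  (∀ v ∈ S, v ∉ S' → ∃ y ∈ Ys, g (Sum.inl v) = Sum.inr y) ∧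
  (∀ y ∈ Ys, ∃ y' ∈ Ys, g (Sum.inr y) = Sum.inr y')

/-- A well-behaved containment structure. -/
def WellBehaved (Din : DispGraph V) (Ys : Set Λ) (χ : CStruct V Λ) : Prop :=
  (∀ u v, χ.G.Arc u v → ¬ ∃ y ∈ Ys, ArcRedundant χ y u v) ∧
  (∀ v ∈ χ.G.verts, ¬ ∃ y ∈ Ys, VertRedundant χ y v) ∧
  (∀ u v, χ.G.Arc u v → ∀ y ∈ Ys, ∀ y' ∈ Ys,
    χ.ι u = Sum.inr y → χ.ι v = Sum.inr y' → y = y') ∧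
  (∀ u ∈ χ.G.verts, ∀ v ∈ χ.G.verts, ∀ s t : V, χ.ι u = Sum.inl s → χ.ι v = Sum.inl t →
    Relation.ReflTransGen χ.G.Arc u v → Relation.ReflTransGen Din.Arc s t)

/-- The labels used for signatures and reconciliations. -/
inductive Lab : Type where
  | past | future | left | right
deriving DecidableEq

/-- The restriction function sending every vertex of `P` to the label `y`. -/
noncomputable def sendVerts (P : Set V) (y : Lab) : V ⊕ Lab → V ⊕ Lab
  | Sum.inl v => if v ∈ P then Sum.inr y else Sum.inl v
  | Sum.inr y' => Sum.inr y'

/-- The restriction function sending `A` to label `a` and `B` to label `b`. -/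
noncomputable def sendVerts2 (A : Set V) (a : Lab) (B : Set V) (b : Lab) :
    V ⊕ Lab → V ⊕ Lab
  | Sum.inl v => if v ∈ A then Sum.inr a else if v ∈ B then Sum.inr b else Sum.inl v
  | Sum.inr y => Sum.inr y

/-- The restriction function merging all labels in `A` into the label `y`. -/
noncomputable def sendLabs (A : Set Lab) (y : Lab) : V ⊕ Lab → V ⊕ Lab
  | Sum.inl v => Sum.inl v
  | Sum.inr y' => if y' ∈ A then Sum.inr y else Sum.inr y'

/-- The restriction function sending label `a` to `ya` and label `b` to `yb`. -/
def sendTwoLabs (a ya b yb : Lab) : V ⊕ Lab → V ⊕ Lab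
  | Sum.inl v => Sum.inl v
  | Sum.inr y => if y = a then Sum.inr ya else if y = b then Sum.inr yb else Sum.inr y

/-- `(P,S,F)` is a bag of a tree decomposition of `Din`: a partition of the vertices
with `S` separating `P` from `F`. -/
def IsBag (Din : DispGraph V) (P S F : Set V) : Prop :=
  P ∪ S ∪ F = Din.verts ∧ Disjoint P S ∧ Disjoint P F ∧ Disjoint S F ∧
  ∀ u v, (Din.Arc u v ∨ Din.Arc v u) → u ∈ P → v ∈ F → False

def pfLabs : Set Lab := {Lab.past, Lab.future}
def lrfLabs : Set Lab := {Lab.left, Lab.right, Lab.future}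

/-- A signature for a bag with present `S` is an `(S,{past,future})`-containment structure. -/
def IsSignature (Din : DispGraph V) (S : Set V) (σ : CStruct V Lab) : Prop :=
  IsCS Din S pfLabs σ

/-- An `F`-partial solution for a bag `(P,S,F)` is a `(P∪S,{future})`-containment structure. -/
def IsPartialSolution (Din : DispGraph V) (P S : Set V) (ψ : CStruct V Lab) : Prop :=
  IsCS Din (P ∪ S) ({Lab.future} : Set Lab) ψ

/-- A (well-behaved) signature is valid for the bag `(P,S,F)` if it is the
`(P→past)`-restriction of a well-behaved `F`-partial solution. -/
def ValidSig (Din : DispGraph V) (P S F : Set V) (σ : CStruct V Lab) : Prop :=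
  ∃ ψ : CStruct V Lab, IsPartialSolution Din P S ψ ∧
    WellBehaved Din ({Lab.future} : Set Lab) ψ ∧
    IsRestrictionOf (sendVerts P Lab.past) σ ψ

/-- A reconciliation for a Join bag with present `S` is an
`(S,{left,right,future})`-containment structure. -/
def IsReconciliation (Din : DispGraph V) (S : Set V) (μ : CStruct V Lab) : Prop :=
  IsCS Din S lrfLabs μ

/-- A reconciliation is valid for the Join bag `(L∪R,S,F)` if it is the
`(L→left, R→right)`-restriction of a well-behaved `F`-partial solution. -/
def ValidRecon (Din : DispGraph V) (L R S F : Set V) (μ : CStruct V Lab) : Prop :=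
  ∃ ψ : CStruct V Lab, IsCS Din (L ∪ R ∪ S) ({Lab.future} : Set Lab) ψ ∧
    WellBehaved Din ({Lab.future} : Set Lab) ψ ∧
    IsRestrictionOf (sendVerts2 L Lab.left R Lab.right) μ ψ

/-- `z` is an internal vertex of the replacement path `Pm u v`. -/
def internalOf (Pm : V → V → List V) (u v z : V) : Prop :=
  z ∈ Pm u v ∧ z ≠ u ∧ z ≠ v

/-- `σ₀` is a subdivision of the containment structure `σ`, with each network
arc `uv` of `σ` replaced by the path `Pm u v`. -/
def IsSubdivisionOfCS (σ₀ σ : CStruct V Λ) (Pm : V → V → List V) : Prop :=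
  σ₀.G.VT = σ.G.VT ∧
  (∀ u v, σ₀.G.TArc u v ↔ σ.G.TArc u v) ∧
  σ.G.VN ⊆ σ₀.G.VN ∧
  σ₀.G.verts = σ.G.verts ∪ {z : V | ∃ u v, σ.G.NArc u v ∧ z ∈ Pm u v} ∧
  (∀ u v, σ.G.NArc u v → DipathFrom σ₀.G.NArc u v (Pm u v) ∧ 2 ≤ (Pm u v).length) ∧
  (∀ u v, σ.G.NArc u v → 2 < (Pm u v).length →
    ∃ y : Λ, σ.ι u = Sum.inr y ∧ σ.ι v = Sum.inr y) ∧
  (∀ u v, σ.G.NArc u v → ∀ z, internalOf Pm u v z →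
    z ∉ σ.G.verts ∧ z ∈ σ₀.G.VN ∧ σ₀.ι z = σ.ι u) ∧
  (∀ u v u' v', σ.G.NArc u v → σ.G.NArc u' v' → (u, v) ≠ (u', v') →
    ∀ z, internalOf Pm u v z → ¬ internalOf Pm u' v' z) ∧
  (∀ a b, σ₀.G.NArc a b ↔ ∃ u v, σ.G.NArc u v ∧ IsArcOf (Pm u v) a b) ∧
  (∀ v ∈ σ.G.verts, σ₀.ι v = σ.ι v) ∧
  (∀ v ∈ σ.G.VT, σ₀.emb.vmap v = σ.emb.vmap v) ∧
  (∀ u v, σ.G.TArc u v →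
    (σ₀.emb.pmap u v).head? = (σ.emb.pmap u v).head? ∧
    (σ₀.emb.pmap u v).getLast? = (σ.emb.pmap u v).getLast? ∧
    ∀ a b, IsArcOf (σ₀.emb.pmap u v) a b ↔
      ∃ c d, IsArcOf (σ.emb.pmap u v) c d ∧ IsArcOf (Pm c d) a b)

/-- `χ` has a long `y`-path: a suppressible degree-(1,1) network vertex between two
network arcs, all three vertices labelled `y`, with no tree vertex embedded into it. -/
def LongYPath (χ : CStruct V Λ) (y : Λ) : Prop :=
  ∃ x₁ x₂ x₃ : V, χ.G.NArc x₁ x₂ ∧ χ.G.NArc x₂ x₃ ∧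
    {u : V | χ.G.NArc u x₂}.ncard = 1 ∧ {u : V | χ.G.NArc x₂ u}.ncard = 1 ∧
    χ.ι x₁ = Sum.inr y ∧ χ.ι x₂ = Sum.inr y ∧ χ.ι x₃ = Sum.inr y ∧
    ∀ w ∈ χ.G.VT, χ.emb.vmap w ≠ x₂

def IsCompact (χ : CStruct V Λ) : Prop := ∀ y : Λ, ¬ LongYPath χ y

/-- `σ` is the compact form of `σ₀`: `σ` is compact and `σ₀` is a subdivision of `σ`. -/
def IsCompactFormOf (σ σ₀ : CStruct V Λ) : Prop :=
  IsCompact σ ∧ ∃ Pm : V → V → List V, IsSubdivisionOfCS σ₀ σ Pm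

/-- Isomorphism of containment structures. -/
def CSIso (χ χ' : CStruct V Λ) : Prop :=
  ∃ f : V → V, Set.BijOn f χ.G.verts χ'.G.verts ∧
    (∀ v ∈ χ.G.verts, (v ∈ χ.G.VT ↔ f v ∈ χ'.G.VT)) ∧
    (∀ v ∈ χ.G.verts, (v ∈ χ.G.VN ↔ f v ∈ χ'.G.VN)) ∧
    (∀ u ∈ χ.G.verts, ∀ v ∈ χ.G.verts, (χ.G.Arc u v ↔ χ'.G.Arc (f u) (f v))) ∧
    (∀ v ∈ χ.G.verts, χ'.ι (f v) = χ.ι v) ∧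
    (∀ v ∈ χ.G.VT, χ'.emb.vmap (f v) = f (χ.emb.vmap v)) ∧
    (∀ u v, χ.G.TArc u v → χ'.emb.pmap (f u) (f v) = (χ.emb.pmap u v).map f)

section AuxListLemmas

variable {V : Type}

lemma isArcOf_cons_cons {x y : V} {r : List V} {a b : V} :
    IsArcOf (x :: y :: r) a b ↔ (a = x ∧ b = y) ∨ IsArcOf (y :: r) a b := by
  simp [IsArcOf, listArcs, List.zip]

lemma arc_of_chain' {A : V → V → Prop} : ∀ {p : List V} {a b : V},
    p.Chain' A → IsArcOf p a b → A a b
  | [], _, _, _, h => by simp [IsArcOf, listArcs] at h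
  | [_], _, _, _, h => by simp [IsArcOf, listArcs] at h
  | x :: y :: r, a, b, hc, h => by
    rcases isArcOf_cons_cons.mp h with ⟨rfl, rfl⟩ | h' 
    · exact (List.isChain_cons_cons.mp hc).1
    · exact arc_of_chain' hc.tail h'

lemma exists_arc_of_mem : ∀ {p : List V} {z : V}, z ∈ p → 2 ≤ p.length →
    (∃ b, IsArcOf p z b) ∨ (∃ a, IsArcOf p a z)
  | [], z, hz, _ => absurd hz (by simp)
  | [x], z, _, hl => by simp at hl
  | x :: y :: r, z, hz, _ => by
    rcases List.mem_cons.mp hz with rfl | hz'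
    · exact Or.inl ⟨y, isArcOf_cons_cons.mpr (Or.inl ⟨rfl, rfl⟩)⟩
    · rcases r with _ | ⟨w, r'⟩
      · have hzy : z = y := by simpa using hz'
        exact Or.inr ⟨x, isArcOf_cons_cons.mpr (Or.inl ⟨rfl, hzy⟩)⟩
      · rcases exists_arc_of_mem hz' (by simp) with ⟨b, hb⟩ | ⟨a, ha⟩
        · exact Or.inl ⟨b, isArcOf_cons_cons.mpr (Or.inr hb)⟩
        · exact Or.inr ⟨a, isArcOf_cons_cons.mpr (Or.inr ha)⟩

lemma head_arc : ∀ {p : List V} {h : V}, p.head? = some h → 2 ≤ p.length →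
    ∃ b, IsArcOf p h b
  | [], h, hh, _ => by simp at hh
  | [x], _, _, hl => by simp at hl
  | x :: y :: r, h, hh, _ => by
    have : x = h := by simpa using hh
    subst this
    exact ⟨y, isArcOf_cons_cons.mpr (Or.inl ⟨rfl, rfl⟩)⟩

lemma two_le_length_of_ne {p : List V} {a b : V} (hh : p.head? = some a)
    (hl : p.getLast? = some b) (hne : a ≠ b) : 2 ≤ p.length := by
  match p with
  | [] => simp at hh
  | [x] =>
    simp_all
  | x :: y :: r => simp

end AuxListLemmas
/-- Every valid reconciliation for a Join bag is well-behaved: if `μ`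
is the `(L→left, R→right)`-restriction of a well-behaved `F`-partial solution `ψ`, then
`μ` has no arc whose endpoints receive two distinct labels from `{left,right,future}`,
and `μ` is well-behaved. -/
theorem validRecon_wellBehaved {V : Type} (Din : DispGraph V) (L R S F : Set V)
    (hbag : IsBag Din (L ∪ R) S F) (hbagL : IsBag Din L S (F ∪ R))
    (hbagR : IsBag Din R S (F ∪ L)) (hLR : Disjoint L R)
    (ψ : CStruct V Lab) (hψ : IsCS Din (L ∪ R ∪ S) ({Lab.future} : Set Lab) ψ)
    (hwbψ : WellBehaved Din ({Lab.future} : Set Lab) ψ)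
    (μ : CStruct V Lab)
    (hres : IsRestrictionOf (sendVerts2 L Lab.left R Lab.right) μ ψ) :
    (∀ u v, μ.G.Arc u v → ∀ y ∈ lrfLabs, ∀ y' ∈ lrfLabs,
        μ.ι u = Sum.inr y → μ.ι v = Sum.inr y' → y = y') ∧
    WellBehaved Din lrfLabs μ := by

  classical
  unfold IsRestrictionOf at hres
  obtain ⟨hverts, harc, hVT, hVN, hvmap, hpmap, hι⟩ := hres
  set χ : CStruct V Lab := ψ.relabel (sendVerts2 L Lab.left R Lab.right) with hχdef
  obtain ⟨hiso, hdeg, hout2⟩ := hψ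
  obtain ⟨hlab, hsurj, hsides, hinjι, hArcIff⟩ := hiso
  -- basic facts
  have hχG : χ.G = ψ.G := rfl
  have hχemb : χ.emb = ψ.emb := rfl
  have hχι : ∀ v, χ.ι v = sendVerts2 L Lab.left R Lab.right (ψ.ι v) := fun _ => rfl
  have hμψ : ∀ {w : V}, w ∈ μ.G.verts → w ∈ ψ.G.verts := by
    intro w hw; rw [hverts] at hw; exact hw.1
  have hnotred : ∀ {w : V}, w ∈ μ.G.verts → ¬ ∃ y, VertRedundant χ y w := by
    intro w hw; rw [hverts] at hw; exact hw.2
  have hVertDel : ∀ {w : V}, w ∈ ψ.G.verts → w ∉ μ.G.verts →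
      ∃ y, VertRedundant χ y w := by
    intro w h1 h2; by_contra hno
    exact h2 (by rw [hverts]; exact ⟨h1, hno⟩)
  have hArcSurv : ∀ {u v : V}, μ.G.Arc u v →
      ψ.G.Arc u v ∧ ¬ ∃ y, ArcRedundant χ y u v := fun {u v} h => (harc u v).mp h
  have hArcDel : ∀ {u v : V}, ψ.G.Arc u v → ¬ μ.G.Arc u v →
      ∃ y, ArcRedundant χ y u v := by
    intro u v h1 h2; by_contra hno
    exact h2 ((harc u v).mpr ⟨h1, hno⟩)
  have hιχ : ∀ {w : V}, w ∈ μ.G.verts → μ.ι w = χ.ι w := fun {w} hw => hι w hw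
  have hVTψ : ∀ {w : V}, w ∈ μ.G.VT → w ∈ ψ.G.VT := by
    intro w hw; rw [hVT] at hw; exact hw.1
  have hVTμ : ∀ {w : V}, w ∈ ψ.G.VT → w ∈ μ.G.verts → w ∈ μ.G.VT := by
    intro w h1 h2; rw [hVT]; exact ⟨h1, h2⟩
  have hVNψ : ∀ {w : V}, w ∈ μ.G.VN → w ∈ ψ.G.VN := by
    intro w hw; rw [hVN] at hw; exact hw.1
  have hVNμ : ∀ {w : V}, w ∈ ψ.G.VN → w ∈ μ.G.verts → w ∈ μ.G.VN := by
    intro w h1 h2; rw [hVN]; exact ⟨h1, h2⟩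
  have hVTverts : ∀ {w : V}, w ∈ ψ.G.VT → w ∈ ψ.G.verts := by
    intro w hw; rw [← ψ.G.union_eq]; exact Or.inl hw
  have hVNverts : ∀ {w : V}, w ∈ ψ.G.VN → w ∈ ψ.G.verts := by
    intro w hw; rw [← ψ.G.union_eq]; exact Or.inr hw
  have hredι : ∀ {y : Lab} {u v : V}, ArcRedundant χ y u v →
      χ.ι u = Sum.inr y ∧ χ.ι v = Sum.inr y := by
    rintro y u v (h | h)
    · exact ⟨h.2.1, h.2.2.1⟩
    · exact ⟨h.2.1, h.2.2.1⟩
  have hTne : ∀ {u v : V}, ψ.G.TArc u v → u ≠ v := by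
    rintro u v h rfl
    exact ψ.G.acyclic u (Relation.TransGen.single h.1)
  have hpmapPath : ∀ {u v : V}, ψ.G.TArc u v →
      DipathFrom ψ.G.netSide.Arc (ψ.emb.vmap u) (ψ.emb.vmap v) (ψ.emb.pmap u v) :=
    fun {u v} h => ψ.emb.path_spec h
  have hpmapLen : ∀ {u v : V}, ψ.G.TArc u v → 2 ≤ (ψ.emb.pmap u v).length := by
    intro u v h
    have hp := hpmapPath h
    refine two_le_length_of_ne hp.2.2.1 hp.2.2.2 ?_
    intro he
    exact hTne h (ψ.emb.inj u h.2.1 v h.2.2 he)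
  -- survival of embedding-path vertices of surviving tree arcs
  have hS : ∀ {u v : V}, μ.G.Arc u v → u ∈ ψ.G.VT → v ∈ ψ.G.VT →
      ∀ z ∈ ψ.emb.pmap u v, z ∈ μ.G.verts := by
    intro u v harcμ huT hvT z hz
    have hψarc := (hArcSurv harcμ).1
    have hTuv : ψ.G.TArc u v := ⟨hψarc, huT, hvT⟩
    have hpath := hpmapPath hTuv
    have hlen := hpmapLen hTuv
    by_contra hzdel
    -- handler for a redundant path arc
    have handler : ∀ {a b : V}, IsArcOf (ψ.emb.pmap u v) a b →
        ∀ {y₀ : Lab}, ArcRedundant χ y₀ a b → False := by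
      intro a b hab y₀ hred
      have hNab : ψ.G.netSide.Arc a b := arc_of_chain' hpath.1 hab
      rcases hred with hT | hN
      · -- a would be a shared vertex with an out-arc
        exact ψ.G.shared_out a ⟨hT.1.2.1, hNab.2.1⟩ b hNab.1
      · have := hN.2.2.2 u v hTuv hab
        exact (hArcSurv harcμ).2 ⟨y₀, Or.inl this⟩
    rcases exists_arc_of_mem hz hlen with ⟨b, hb⟩ | ⟨a, ha⟩
    · have hNzb : ψ.G.netSide.Arc z b := arc_of_chain' hpath.1 hb
      obtain ⟨y₀, hred⟩ := hVertDel (hVNverts hNzb.2.1) hzdel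
      rcases hred with hT | hN
      · exact ψ.G.shared_out z ⟨hT.1, hNzb.2.1⟩ b hNzb.1
      · exact handler hb (hN.2.2.2.1 b hNzb.1)
    · have hNaz : ψ.G.netSide.Arc a z := arc_of_chain' hpath.1 ha
      obtain ⟨y₀, hred⟩ := hVertDel (hVNverts hNaz.2.2) hzdel
      rcases hred with hT | hN
      · exact handler ha (hT.2.2.2.1 a hNaz.1)
      · exact handler ha (hN.2.2.1 a hNaz.1)
  -- transfer of tree-arc redundancy
  have hT1 : ∀ {y : Lab} {u v : V}, TArcRedundant μ y u v → TArcRedundant χ y u v := by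
    intro y u v h
    obtain ⟨hTμ, hu, hv, hp⟩ := h
    have harcμ : μ.G.Arc u v := hTμ.1
    have huT : u ∈ ψ.G.VT := hVTψ hTμ.2.1
    have hvT : v ∈ ψ.G.VT := hVTψ hTμ.2.2
    have humem : u ∈ μ.G.verts := μ.G.arc_left harcμ
    have hvmem : v ∈ μ.G.verts := μ.G.arc_right harcμ
    have hpeq : μ.emb.pmap u v = ψ.emb.pmap u v := hpmap u v hTμ
    refine ⟨⟨(hArcSurv harcμ).1, huT, hvT⟩, (hιχ humem).symm.trans hu,
      (hιχ hvmem).symm.trans hv, ?_⟩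
    intro z hzmem
    have hzμ : z ∈ μ.G.verts := hS harcμ huT hvT z hzmem
    have := hp z (by rw [hpeq]; exact hzmem)
    exact (hιχ hzμ).symm.trans this
  -- transfer of network-arc redundancy
  have hT2 : ∀ {y : Lab} {u v : V}, NArcRedundant μ y u v → NArcRedundant χ y u v := by
    intro y u v h
    obtain ⟨hNμ, hu, hv, h4⟩ := h
    have harcμ : μ.G.Arc u v := hNμ.1
    have humem : u ∈ μ.G.verts := μ.G.arc_left harcμ
    have hvmem : v ∈ μ.G.verts := μ.G.arc_right harcμ
    have hχu : χ.ι u = Sum.inr y := (hιχ humem).symm.trans hu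
    refine ⟨⟨(hArcSurv harcμ).1, hVNψ hNμ.2.1, hVNψ hNμ.2.2⟩, hχu,
      (hιχ hvmem).symm.trans hv, ?_⟩
    intro u' v' hT' hA'
    by_cases hsurv : μ.G.Arc u' v'
    · have hTμ' : μ.G.TArc u' v' :=
        ⟨hsurv, hVTμ hT'.2.1 (μ.G.arc_left hsurv), hVTμ hT'.2.2 (μ.G.arc_right hsurv)⟩
      exact hT1 (h4 u' v' hTμ' (by rw [hpmap u' v' hTμ']; exact hA'))
    · obtain ⟨y₀, h₀⟩ := hArcDel hT'.1 hsurv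
      rcases h₀ with hTr | hNr
      · have humem' : u ∈ ψ.emb.pmap u' v' := isArcOf_mem_left hA'
        have hy : y₀ = y := Sum.inr.inj ((hTr.2.2.2 u humem').symm.trans hχu)
        exact hy ▸ hTr
      · exact absurd hNr.1.1 (ψ.G.shared_out u' ⟨hT'.2.1, hNr.1.2.1⟩ v')
  have hT : ∀ {y : Lab} {u v : V}, ArcRedundant μ y u v → ArcRedundant χ y u v := by
    rintro y u v (h | h)
    · exact Or.inl (hT1 h)
    · exact Or.inr (hT2 h)
  -- redundancy of all ψ-arcs at a surviving labelled vertex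
  have hArcsIn : ∀ {y : Lab} {w : V}, χ.ι w = Sum.inr y →
      (∀ u, μ.G.Arc u w → ArcRedundant μ y u w) →
      ∀ u, ψ.G.Arc u w → ArcRedundant χ y u w := by
    intro y w hw hall u harcψ
    by_cases hsurv : μ.G.Arc u w
    · exact hT (hall u hsurv)
    · obtain ⟨y₀, h₀⟩ := hArcDel harcψ hsurv
      have hy : y₀ = y := Sum.inr.inj (((hredι h₀).2).symm.trans hw)
      exact hy ▸ h₀
  have hArcsOut : ∀ {y : Lab} {w : V}, χ.ι w = Sum.inr y →
      (∀ u, μ.G.Arc w u → ArcRedundant μ y w u) →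
      ∀ u, ψ.G.Arc w u → ArcRedundant χ y w u := by
    intro y w hw hall u harcψ
    by_cases hsurv : μ.G.Arc w u
    · exact hT (hall u hsurv)
    · obtain ⟨y₀, h₀⟩ := hArcDel harcψ hsurv
      have hy : y₀ = y := Sum.inr.inj (((hredι h₀).1).symm.trans hw)
      exact hy ▸ h₀
  -- transfer of tree-vertex redundancy
  have hTV : ∀ {y : Lab} {v : V}, v ∈ μ.G.verts → TVertRedundant μ y v →
      TVertRedundant χ y v := by
    intro y v hv h
    obtain ⟨hvT, hι1, hι2, h4, h5, h6, h7⟩ := h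
    have hvTψ2 : v ∈ ψ.G.VT := hVTψ hvT
    have hxeq : μ.emb.vmap v = ψ.emb.vmap v := hvmap v hvT
    have hχv : χ.ι v = Sum.inr y := (hιχ hv).symm.trans hι1
    have hxVN : ψ.emb.vmap v ∈ ψ.G.VN := ψ.emb.vmap_mem v hvTψ2
    have hxverts : ψ.emb.vmap v ∈ ψ.G.verts := hVNverts hxVN
    rw [hxeq] at hι2 h6 h7
    have hxfacts : χ.ι (ψ.emb.vmap v) = Sum.inr y ∧
        (∀ u, ψ.G.Arc u (ψ.emb.vmap v) → ArcRedundant χ y u (ψ.emb.vmap v)) ∧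
        (∀ u, ψ.G.Arc (ψ.emb.vmap v) u → ArcRedundant χ y (ψ.emb.vmap v) u) := by
      by_cases hxmem : ψ.emb.vmap v ∈ μ.G.verts
      · have hχx : χ.ι (ψ.emb.vmap v) = Sum.inr y := (hιχ hxmem).symm.trans hι2
        exact ⟨hχx, hArcsIn hχx h6, hArcsOut hχx h7⟩
      · obtain ⟨y₀, hred⟩ := hVertDel hxverts hxmem
        rcases hred with hredT | hredN
        · by_cases hvx : v = ψ.emb.vmap v
          · exact absurd ⟨y₀, Or.inl (hvx ▸ hredT)⟩ (hnotred hv)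
          · have hχx : χ.ι (ψ.emb.vmap v) = Sum.inr y := by
              by_cases hll : ψ.ι v = ψ.ι (ψ.emb.vmap v)
              · rw [hχι, ← hll, ← hχι]; exact hχv
              · exfalso
                have hod := hout2 v hvTψ2 hll
                have hod2 : {w : V | ψ.G.Arc v w}.ncard = 2 := hod
                obtain ⟨w, hwarc⟩ : {w : V | ψ.G.Arc v w}.Nonempty :=
                  Set.nonempty_of_ncard_ne_zero (by rw [hod2]; exact two_ne_zero)
                have hwnT : w ∉ ψ.G.VT := by
                  intro hwT
                  have hTvw : ψ.G.TArc v w := ⟨hwarc, hvTψ2, hwT⟩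
                  obtain ⟨b, hb⟩ := head_arc (hpmapPath hTvw).2.2.1 (hpmapLen hTvw)
                  have hNxb : ψ.G.netSide.Arc (ψ.emb.vmap v) b :=
                    arc_of_chain' (hpmapPath hTvw).1 hb
                  exact ψ.G.shared_out (ψ.emb.vmap v) ⟨hredT.1, hxVN⟩ b hNxb.1
                have hwVN : w ∈ ψ.G.VN := by
                  have := ψ.G.arc_right hwarc
                  rw [← ψ.G.union_eq] at this
                  rcases this with h | h
                  · exact absurd h hwnT
                  · exact h
                have hvnN : v ∉ ψ.G.VN := fun hvN =>
                  ψ.G.shared_out v ⟨hvTψ2, hvN⟩ w hwarc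
                by_cases hsurv : μ.G.Arc v w
                · rcases h5 w hsurv with hT' | hN'
                  · exact hwnT (hVTψ hT'.1.2.2)
                  · exact hvnN (hVNψ hN'.1.2.1)
                · obtain ⟨y₁, h₁⟩ := hArcDel hwarc hsurv
                  rcases h₁ with hT' | hN'
                  · exact hwnT hT'.1.2.2
                  · exact hvnN hN'.1.2.1
            have hy : y₀ = y := Sum.inr.inj (hredT.2.1.symm.trans hχx)
            subst hy
            exact ⟨hχx, hredT.2.2.2.1, hredT.2.2.2.2.1⟩
        · exact absurd ⟨y₀, Or.inl (hredN.2.2.2.2 v hvTψ2 rfl)⟩ (hnotred hv)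
    exact ⟨hvTψ2, hχv, hxfacts.1, hArcsIn hχv h4, hArcsOut hχv h5,
      hxfacts.2.1, hxfacts.2.2⟩
  -- transfer of network-vertex redundancy
  have hNV : ∀ {y : Lab} {v : V}, v ∈ μ.G.verts → NVertRedundant μ y v →
      NVertRedundant χ y v := by
    intro y v hv h
    obtain ⟨hvN, hι1, h3, h4, h5⟩ := h
    have hχv : χ.ι v = Sum.inr y := (hιχ hv).symm.trans hι1
    refine ⟨hVNψ hvN, hχv, hArcsIn hχv h3, hArcsOut hχv h4, ?_⟩
    intro w hwT hwmap
    by_cases hwmem : w ∈ μ.G.verts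
    · have hwTμ : w ∈ μ.G.VT := hVTμ hwT hwmem
      exact hTV hwmem (h5 w hwTμ ((hvmap w hwTμ).trans hwmap))
    · obtain ⟨y₀, hred⟩ := hVertDel (hVTverts hwT) hwmem
      rcases hred with hredT | hredN
      · have hχveq : χ.ι v = Sum.inr y₀ := hwmap ▸ hredT.2.2.1
        have hy : y₀ = y := Sum.inr.inj (hχveq.symm.trans hχv)
        exact hy ▸ hredT
      · have hwVN : w ∈ ψ.G.VN := hredN.1
        have hfix : ψ.emb.vmap w = w := ψ.emb.fixes w ⟨hwT, hwVN⟩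
        have hwv : w = v := hfix.symm.trans hwmap
        subst hwv
        have hy : y₀ = y := Sum.inr.inj (hredN.2.1.symm.trans hχv)
        subst hy
        exact hredN.2.2.2.2 w hwT hfix
  -- neighbour labelling lemmas
  have hfin : ψ.G.verts.Finite := ψ.G.finite
  choose cp hc1 hc2 using fun (t : V) (h : t ∈ L ∪ R ∪ S) => hsurj t h
  have nbrOut : ∀ (P FS : Set V), IsBag Din P S FS → P ∪ S ⊆ L ∪ R ∪ S →
      ∀ u, u ∈ ψ.G.verts → ∀ s, s ∈ P → ψ.ι u = Sum.inl s →
      ∀ v, ψ.G.Arc u v → ∃ t ∈ P ∪ S, ψ.ι v = Sum.inl t := by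
    intro P FS hb hsub u hu s hsP hιu v harcu
    obtain ⟨hbU, _, _, _, hbsep⟩ := hb
    have hsLRS : s ∈ L ∪ R ∪ S := hsub (Or.inl hsP)
    have hBfin : {w : V | ψ.G.Arc u w}.Finite :=
      hfin.subset (fun w hw => ψ.G.arc_right hw)
    have hcard : {w : V | ψ.G.Arc u w}.ncard = {t : V | Din.Arc s t}.ncard :=
      (hdeg u hu s hsLRS hιu).2
    have hAsub : ∀ t ∈ {t : V | Din.Arc s t}, t ∈ P ∪ S := by
      intro t ht
      have htv : t ∈ Din.verts := Din.arc_right ht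
      rw [← hbU] at htv
      rcases htv with hPS | hFS
      · exact hPS
      · exact absurd hFS (fun hf => hbsep s t (Or.inl ht) hsP hf)
    set f : V → V := fun t => if h : t ∈ L ∪ R ∪ S then cp t h else t with hf
    have hfB : ∀ t ∈ {t : V | Din.Arc s t},
        f t ∈ {w : V | ψ.G.Arc u w} ∧ ψ.ι (f t) = Sum.inl t := by
      intro t ht
      have htLRS : t ∈ L ∪ R ∪ S := hsub (hAsub t ht)
      have hfe : f t = cp t htLRS := by rw [hf]; simp [htLRS]
      rw [hfe]
      exact ⟨(hArcIff u hu (cp t htLRS) (hc1 t htLRS) s hsLRS t htLRS hιu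
        (hc2 t htLRS)).mpr ht, hc2 t htLRS⟩
    have hinjA : Set.InjOn f {t : V | Din.Arc s t} := by
      intro t1 h1 t2 h2 he
      have e1 := (hfB t1 h1).2
      rw [he] at e1
      exact Sum.inl.inj (e1.symm.trans (hfB t2 h2).2)
    have himage : f '' {t : V | Din.Arc s t} ⊆ {w : V | ψ.G.Arc u w} := by
      rintro w ⟨t, ht, rfl⟩; exact (hfB t ht).1
    have heq : f '' {t : V | Din.Arc s t} = {w : V | ψ.G.Arc u w} :=
      Set.eq_of_subset_of_ncard_le himage
        (by rw [Set.ncard_image_of_injOn hinjA, hcard]) hBfin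
    have hvB : v ∈ f '' {t : V | Din.Arc s t} := by rw [heq]; exact harcu
    obtain ⟨t, ht, rfl⟩ := hvB
    exact ⟨t, hAsub t ht, (hfB t ht).2⟩
  have nbrIn : ∀ (P FS : Set V), IsBag Din P S FS → P ∪ S ⊆ L ∪ R ∪ S →
      ∀ u, u ∈ ψ.G.verts → ∀ s, s ∈ P → ψ.ι u = Sum.inl s →
      ∀ v, ψ.G.Arc v u → ∃ t ∈ P ∪ S, ψ.ι v = Sum.inl t := by
    intro P FS hb hsub u hu s hsP hιu v harcu
    obtain ⟨hbU, _, _, _, hbsep⟩ := hb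
    have hsLRS : s ∈ L ∪ R ∪ S := hsub (Or.inl hsP)
    have hBfin : {w : V | ψ.G.Arc w u}.Finite :=
      hfin.subset (fun w hw => ψ.G.arc_left hw)
    have hcard : {w : V | ψ.G.Arc w u}.ncard = {t : V | Din.Arc t s}.ncard :=
      (hdeg u hu s hsLRS hιu).1
    have hAsub : ∀ t ∈ {t : V | Din.Arc t s}, t ∈ P ∪ S := by
      intro t ht
      have htv : t ∈ Din.verts := Din.arc_left ht
      rw [← hbU] at htv
      rcases htv with hPS | hFS
      · exact hPS
      · exact absurd hFS (fun hf => hbsep s t (Or.inr ht) hsP hf)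
    set f : V → V := fun t => if h : t ∈ L ∪ R ∪ S then cp t h else t with hf
    have hfB : ∀ t ∈ {t : V | Din.Arc t s},
        f t ∈ {w : V | ψ.G.Arc w u} ∧ ψ.ι (f t) = Sum.inl t := by
      intro t ht
      have htLRS : t ∈ L ∪ R ∪ S := hsub (hAsub t ht)
      have hfe : f t = cp t htLRS := by rw [hf]; simp [htLRS]
      rw [hfe]
      exact ⟨(hArcIff (cp t htLRS) (hc1 t htLRS) u hu t htLRS s hsLRS
        (hc2 t htLRS) hιu).mpr ht, hc2 t htLRS⟩
    have hinjA : Set.InjOn f {t : V | Din.Arc t s} := by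
      intro t1 h1 t2 h2 he
      have e1 := (hfB t1 h1).2
      rw [he] at e1
      exact Sum.inl.inj (e1.symm.trans (hfB t2 h2).2)
    have himage : f '' {t : V | Din.Arc t s} ⊆ {w : V | ψ.G.Arc w u} := by
      rintro w ⟨t, ht, rfl⟩; exact (hfB t ht).1
    have heq : f '' {t : V | Din.Arc t s} = {w : V | ψ.G.Arc w u} :=
      Set.eq_of_subset_of_ncard_le himage
        (by rw [Set.ncard_image_of_injOn hinjA, hcard]) hBfin
    have hvB : v ∈ f '' {t : V | Din.Arc t s} := by rw [heq]; exact harcu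
    obtain ⟨t, ht, rfl⟩ := hvB
    exact ⟨t, hAsub t ht, (hfB t ht).2⟩
  -- forms of the labels
  have hform : ∀ w ∈ μ.G.verts, ∀ yy : Lab, μ.ι w = Sum.inr yy →
      (yy = Lab.left → ∃ s ∈ L, ψ.ι w = Sum.inl s) ∧
      (yy = Lab.right → ∃ s ∈ R, ψ.ι w = Sum.inl s) ∧
      (yy = Lab.future → ψ.ι w = Sum.inr Lab.future) := by
    intro w hw yy hyy
    rw [hι w hw] at hyy
    cases hψw : ψ.ι w with
    | inl s =>
      rw [hψw] at hyy
      by_cases hsL : s ∈ L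
      · rw [show sendVerts2 L Lab.left R Lab.right (Sum.inl s) = Sum.inr Lab.left from
          by simp [sendVerts2, hsL]] at hyy
        obtain rfl : Lab.left = yy := Sum.inr.inj hyy
        exact ⟨fun _ => ⟨s, hsL, rfl⟩, fun h => absurd h (by decide),
          fun h => absurd h (by decide)⟩
      · by_cases hsR : s ∈ R
        · rw [show sendVerts2 L Lab.left R Lab.right (Sum.inl s) = Sum.inr Lab.right from
            by simp [sendVerts2, hsL, hsR]] at hyy
          obtain rfl : Lab.right = yy := Sum.inr.inj hyy
          exact ⟨fun h => absurd h (by decide), fun _ => ⟨s, hsR, rfl⟩,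
            fun h => absurd h (by decide)⟩
        · rw [show sendVerts2 L Lab.left R Lab.right (Sum.inl s) = Sum.inl s from
            by simp [sendVerts2, hsL, hsR]] at hyy
          exact absurd hyy (by simp)
    | inr y0 =>
      rw [hψw] at hyy
      rw [show sendVerts2 L Lab.left R Lab.right (Sum.inr y0) = Sum.inr y0 from
        by simp [sendVerts2]] at hyy
      obtain rfl : y0 = yy := Sum.inr.inj hyy
      have hy0 : y0 = Lab.future := by
        rcases hlab w (hμψ hw) with ⟨s, _, he⟩ | ⟨y', hy', he⟩
        · rw [hψw] at he; exact absurd he (by simp)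
        · rw [hψw] at he
          have : y0 = y' := Sum.inr.inj he
          rw [this]; simpa using hy'
      subst hy0
      exact ⟨fun h => absurd h (by decide), fun h => absurd h (by decide),
        fun _ => rfl⟩
  -- part (c): label agreement
  have hsubL : L ∪ S ⊆ L ∪ R ∪ S := by
    rintro t (h | h)
    · exact Or.inl (Or.inl h)
    · exact Or.inr h
  have hsubR : R ∪ S ⊆ L ∪ R ∪ S := by
    rintro t (h | h)
    · exact Or.inl (Or.inr h)
    · exact Or.inr h
  have partc : ∀ u v, μ.G.Arc u v → ∀ y ∈ lrfLabs, ∀ y' ∈ lrfLabs,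
      μ.ι u = Sum.inr y → μ.ι v = Sum.inr y' → y = y' := by
    intro u v harcμ y hy y' hy' hu hv
    have humem : u ∈ μ.G.verts := μ.G.arc_left harcμ
    have hvmem : v ∈ μ.G.verts := μ.G.arc_right harcμ
    have huψ := hμψ humem
    have hvψ := hμψ hvmem
    have harcψ := (hArcSurv harcμ).1
    have hfu := hform u humem y hu
    have hfv := hform v hvmem y' hv
    have hLdisj : ∀ {t : V}, t ∈ L ∪ S → t ∈ R → False := by
      rintro t (h | h) hr
      · exact Set.disjoint_left.mp hLR h hr
      · exact Set.disjoint_left.mp hbagR.2.1 hr h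
    have hRdisj : ∀ {t : V}, t ∈ R ∪ S → t ∈ L → False := by
      rintro t (h | h) hl
      · exact Set.disjoint_left.mp hLR hl h
      · exact Set.disjoint_left.mp hbagL.2.1 hl h
    simp only [lrfLabs, Set.mem_insert_iff, Set.mem_singleton_iff] at hy hy'
    rcases hy with rfl | rfl | rfl <;> rcases hy' with rfl | rfl | rfl
    · rfl
    · -- left, right
      exfalso
      obtain ⟨s, hsL, hψu⟩ := hfu.1 rfl
      obtain ⟨t0, ht0, hψv⟩ := hfv.2.1 rfl
      obtain ⟨t, ht, he⟩ := nbrOut L (F ∪ R) hbagL hsubL u huψ s hsL hψu v harcψ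
      obtain rfl : t = t0 := Sum.inl.inj (he.symm.trans hψv)
      exact hLdisj ht ht0
    · -- left, future
      exfalso
      obtain ⟨s, hsL, hψu⟩ := hfu.1 rfl
      obtain ⟨t, ht, he⟩ := nbrOut L (F ∪ R) hbagL hsubL u huψ s hsL hψu v harcψ
      exact absurd (he.symm.trans (hfv.2.2 rfl)) (by simp)
    · -- right, left
      exfalso
      obtain ⟨s, hsR, hψu⟩ := hfu.2.1 rfl
      obtain ⟨t0, ht0, hψv⟩ := hfv.1 rfl
      obtain ⟨t, ht, he⟩ := nbrOut R (F ∪ L) hbagR hsubR u huψ s hsR hψu v harcψ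
      obtain rfl : t = t0 := Sum.inl.inj (he.symm.trans hψv)
      exact hRdisj ht ht0
    · rfl
    · -- right, future
      exfalso
      obtain ⟨s, hsR, hψu⟩ := hfu.2.1 rfl
      obtain ⟨t, ht, he⟩ := nbrOut R (F ∪ L) hbagR hsubR u huψ s hsR hψu v harcψ
      exact absurd (he.symm.trans (hfv.2.2 rfl)) (by simp)
    · -- future, left
      exfalso
      obtain ⟨t0, ht0, hψv⟩ := hfv.1 rfl
      obtain ⟨t, ht, he⟩ := nbrIn L (F ∪ R) hbagL hsubL v hvψ t0 ht0 hψv u harcψ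
      exact absurd (he.symm.trans (hfu.2.2 rfl)) (by simp)
    · -- future, right
      exfalso
      obtain ⟨t0, ht0, hψv⟩ := hfv.2.1 rfl
      obtain ⟨t, ht, he⟩ := nbrIn R (F ∪ L) hbagR hsubR v hvψ t0 ht0 hψv u harcψ
      exact absurd (he.symm.trans (hfu.2.2 rfl)) (by simp)
    · rfl
  -- part (d)
  have hinl : ∀ {w : V} {s : V}, w ∈ μ.G.verts → μ.ι w = Sum.inl s →
      ψ.ι w = Sum.inl s := by
    intro w s hw he
    rw [hι w hw] at he
    cases hψw : ψ.ι w with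
    | inl s' =>
      rw [hψw] at he
      by_cases hsL : s' ∈ L
      · rw [show sendVerts2 L Lab.left R Lab.right (Sum.inl s') = Sum.inr Lab.left from
          by simp [sendVerts2, hsL]] at he
        exact absurd he (by simp)
      · by_cases hsR : s' ∈ R
        · rw [show sendVerts2 L Lab.left R Lab.right (Sum.inl s') = Sum.inr Lab.right from
            by simp [sendVerts2, hsL, hsR]] at he
          exact absurd he (by simp)
        · rw [show sendVerts2 L Lab.left R Lab.right (Sum.inl s') = Sum.inl s' from
            by simp [sendVerts2, hsL, hsR]] at he
          exact he
    | inr y0 =>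
      rw [hψw] at he
      rw [show sendVerts2 L Lab.left R Lab.right (Sum.inr y0) = Sum.inr y0 from
        by simp [sendVerts2]] at he
      exact absurd he (by simp)
  have partd : ∀ u ∈ μ.G.verts, ∀ v ∈ μ.G.verts, ∀ s t : V,
      μ.ι u = Sum.inl s → μ.ι v = Sum.inl t →
      Relation.ReflTransGen μ.G.Arc u v → Relation.ReflTransGen Din.Arc s t := by
    intro u hu v hv s t hιu hιv hpath
    refine hwbψ.2.2.2 u (hμψ hu) v (hμψ hv) s t (hinl hu hιu) (hinl hv hιv) ?_
    exact Relation.ReflTransGen.mono (fun a b h => (hArcSurv h).1) _ _ hpath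
  refine ⟨partc, ?_, ?_, partc, partd⟩
  · rintro u v harcμ ⟨y, _, hred⟩
    exact (hArcSurv harcμ).2 ⟨y, hT hred⟩
  · rintro v hv ⟨y, _, hred | hred⟩
    · exact hnotred hv ⟨y, Or.inl (hTV hv hred)⟩
    · exact hnotred hv ⟨y, Or.inr (hNV hv hred)⟩

end TreeContainment
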